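/- For every positive integer b, E[min(Pois(b), b)]/b = 1 - e^{-b} b^b / b!, where Pois(b) is a Poisson random variable with mean b. -/

import Mathlib

/-!
Since `min k b = b - (b - k)` and `b - k` vanishes for `k ≥ b`, for any distribution `p` on `ℕ`
the truncated mean `∑ p k * min k b` equals `b - ∑_{k < b} (b - k) p k`, a finite sum.
The Poisson weights satisfy `k p_l(k) = l p_l(k - 1)`, so `∑_{k < n} (l - k) p_l(k)` telescopes
to `n p_l(n)`. At `l = n = b` this gives `E[min(Pois(b), b)] = b (1 - p_b(b))`.
-/

open Real Finset

/-- Poisson pmf with rate `l`. -/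
noncomputable def ppmf (l : ℝ) (k : ℕ) : ℝ := Real.exp (-l) * l ^ k / (Nat.factorial k)

/-- Expected value of `min(Pois(l), b)`. -/
noncomputable def truncMean (l : ℝ) (b : ℕ) : ℝ := ∑' k : ℕ, ppmf l k * (min k b : ℕ)

lemma hasSum_mul_min_of_hasSum {p : ℕ → ℝ} {s : ℝ} (hp : HasSum p s) (b : ℕ) :
    HasSum (fun k => p k * (min k b : ℕ)) (b * s - ∑ k ∈ range b, (b - k : ℝ) * p k) := by
  have hdeficit : HasSum (fun k => ((b - k : ℕ) : ℝ) * p k)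
      (∑ k ∈ range b, ((b - k : ℕ) : ℝ) * p k) :=
    hasSum_sum_of_ne_finset_zero fun k hk => by
      rw [Nat.sub_eq_zero_of_le (not_lt.1 (mem_range.not.1 hk)), Nat.cast_zero, zero_mul]
  have hterm (k : ℕ) : p k * (min k b : ℕ) = b * p k - ((b - k : ℕ) : ℝ) * p k := by
    rcases le_total k b with h | h
    · rw [min_eq_left h, Nat.cast_sub h]; ring
    · rw [min_eq_right h, Nat.sub_eq_zero_of_le h, Nat.cast_zero]; ring
  have hdeficit_sum : ∑ k ∈ range b, ((b - k : ℕ) : ℝ) * p k = ∑ k ∈ range b, (b - k : ℝ) * p k :=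
    sum_congr rfl fun k hk => by rw [Nat.cast_sub (mem_range.1 hk).le]
  rw [funext hterm, ← hdeficit_sum]
  exact (hp.mul_left (b : ℝ)).sub hdeficit

lemma hasSum_ppmf (l : ℝ) : HasSum (ppmf l) 1 := by
  have h := (NormedSpace.expSeries_div_hasSum_exp l).mul_left (exp (-l))
  rw [← congrFun exp_eq_exp_ℝ, ← exp_add, neg_add_cancel, exp_zero] at h
  exact h.congr_fun fun k => mul_div_assoc ..

lemma succ_mul_ppmf_succ (l : ℝ) (k : ℕ) : (k + 1) * ppmf l (k + 1) = l * ppmf l k := by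
  simp only [ppmf, Nat.factorial_succ, Nat.cast_mul, Nat.cast_succ, pow_succ]
  field_simp

lemma sum_range_sub_mul_ppmf (l : ℝ) (n : ℕ) :
    ∑ k ∈ range n, (l - k) * ppmf l k = n * ppmf l n := by
  induction n with
  | zero => simp
  | succ n ih =>
    rw [sum_range_succ, ih, Nat.cast_succ, succ_mul_ppmf_succ]
    ring

lemma truncMean_self (b : ℕ) : truncMean b b = b * (1 - ppmf b b) := by
  rw [truncMean, (hasSum_mul_min_of_hasSum (hasSum_ppmf b) b).tsum_eq,
    sum_range_sub_mul_ppmf]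
  ring

theorem truncMean_div_eq_general (b : ℕ) :
    truncMean b b / b = 1 - Real.exp (-(b : ℝ)) * (b : ℝ) ^ b / (Nat.factorial b) := by
  rcases Nat.eq_zero_or_pos b with rfl | hb
  · simp
  · rw [truncMean_self, mul_div_cancel_left₀ _ (by positivity), ppmf]

theorem truncMean_div_eq (b : ℕ) (hb : 0 < b) :
    truncMean b b / b = 1 - Real.exp (-(b : ℝ)) * (b : ℝ) ^ b / (Nat.factorial b) :=
  truncMean_div_eq_general b
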